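/- arXiv:2303.04113 — 3 statements merged into one kernel-verified Lean document; each statement's English description precedes it below -/
import Mathlib

section
/- For positive integers k and m, k^m = \sum_{i=0}^{m-1} A(m,i) * C(k+i, m), where A(m,i) is the Eulerian number counting permutations of [m] with exactly i descents (Worpitzky's identity). -/
/-!
Sort each map `f : Fin m → Fin k` stably: `f` is sorted by the permutation `p` iff
`i ↦ (f (p i), p i)` is lexicographically strictly increasing, i.e. `f ∘ p` is weakly increasing
and strictly increasing at the descents of `p`. Adding to `f (p j)` the number of ascents of `p`
before position `j` makes these maps exactly the strictly increasing maps
`Fin m → Fin (k + asc p)`, so `p` sorts `C(k + asc p, m)` of the `k ^ m` maps. Reversing `p`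
exchanges ascents and descents, and grouping permutations by their number of descents gives the
identity.
-/

open Finset

noncomputable section

/-- The value of the permutation `p` of `Fin m` at position `j`, read in one-line
notation (0-indexed), extended by `0` outside the range. -/
def permVal {m : ℕ} (p : Equiv.Perm (Fin m)) (j : ℕ) : ℕ :=
  if h : j < m then (p ⟨j, h⟩ : ℕ) else 0

/-- The number of descents of the permutation `p` of `Fin m`, in one-line notation. -/
def desNum {m : ℕ} (p : Equiv.Perm (Fin m)) : ℕ :=
  ((Finset.range (m - 1)).filter fun j => permVal p (j + 1) < permVal p j).card

/-- The Eulerian number `A(m, i)`: the number of permutations of an `m`-element set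
with exactly `i` descents. -/
def eulerian (m i : ℕ) : ℕ :=
  (Finset.univ.filter fun p : Equiv.Perm (Fin m) => desNum p = i).card

theorem card_orderEmbedding_fin (r N : ℕ) : Nat.card (Fin r ↪o Fin N) = N.choose r := by
  rw [Nat.card_congr Set.powersetCard.ofFinEmbEquiv, Set.powersetCard.card, Nat.card_fin]

theorem Fin.val_le_apply_of_strictMono {n : ℕ} {h : Fin (n + 1) → ℕ} (hh : StrictMono h)
    (j : Fin (n + 1)) : (j : ℕ) ≤ h j := by
  induction j using Fin.induction with
  | zero => exact Nat.zero_le _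
  | succ i ih =>
    have := hh (Fin.castSucc_lt_succ (i := i))
    rw [Fin.val_castSucc] at ih
    rw [Fin.val_succ]
    omega

section Ascents

variable {α : Type*} [LinearOrder α]

def ascCount (t : ℕ → α) (j : ℕ) : ℕ := #{i ∈ range j | t i < t (i + 1)}

theorem ascCount_succ (t : ℕ → α) (j : ℕ) :
    ascCount t (j + 1) = ascCount t j + if t j < t (j + 1) then 1 else 0 := by
  simp only [ascCount, card_filter, sum_range_succ]

theorem ascCount_le_self (t : ℕ → α) (j : ℕ) : ascCount t j ≤ j :=
  (card_filter_le _ _).trans (card_range j).le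

theorem ascCount_monotone (t : ℕ → α) : Monotone (ascCount t) := fun _ _ h =>
  card_le_card (filter_subset_filter _ (range_subset_range.2 h))

variable {n : ℕ} {t : ℕ → α}

theorem strictMono_add_ascCount {g : Fin (n + 1) → ℕ}
    (hg : StrictMono fun i : Fin (n + 1) => toLex (g i, t i)) :
    StrictMono fun i : Fin (n + 1) => g i + ascCount t i := by
  refine Fin.strictMono_iff_lt_succ.2 fun i => ?_
  have hstep := Prod.Lex.toLex_lt_toLex.1 (hg (Fin.castSucc_lt_succ (i := i)))
  simp only [Fin.val_castSucc, Fin.val_succ, ascCount_succ] at hstep ⊢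
  rcases hstep with hlt | ⟨heq, hasc⟩
  · split_ifs <;> omega
  · rw [if_pos hasc]; omega

theorem strictMono_toLex_sub_ascCount {h : Fin (n + 1) → ℕ} (hh : StrictMono h) :
    StrictMono fun i : Fin (n + 1) => toLex (h i - ascCount t i, t i) := by
  refine Fin.strictMono_iff_lt_succ.2 fun i => Prod.Lex.toLex_lt_toLex.2 ?_
  have hlt := hh (Fin.castSucc_lt_succ (i := i))
  have hle := (ascCount_le_self t i).trans (Fin.val_le_apply_of_strictMono hh i.castSucc)
  simp only [Fin.val_castSucc, Fin.val_succ, ascCount_succ] at hlt hle ⊢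
  split_ifs with hasc
  · by_cases heq : h i.castSucc - ascCount t i = h i.succ - (ascCount t i + 1)
    · exact Or.inr ⟨heq, hasc⟩
    · left; omega
  · left; omega

theorem card_strictMono_toLex (t : ℕ → α) (n k : ℕ) :
    Nat.card {g : Fin (n + 1) → Fin k // StrictMono fun i => toLex ((g i : ℕ), t i)} =
      (k + ascCount t n).choose (n + 1) := by
  set K := k + ascCount t n
  have hval (e : Fin (n + 1) ↪o Fin K) : StrictMono fun j => (e j : ℕ) :=
    Fin.val_strictMono.comp e.strictMono
  have hle (e : Fin (n + 1) ↪o Fin K) (j : Fin (n + 1)) : ascCount t j ≤ e j :=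
    (ascCount_le_self t j).trans (Fin.val_le_apply_of_strictMono (hval e) j)
  have hlt (e : Fin (n + 1) ↪o Fin K) (j : Fin (n + 1)) : (e j : ℕ) - ascCount t j < k := by
    have hmono : (e j : ℕ) - ascCount t j ≤ e (Fin.last n) - ascCount t n :=
      Prod.Lex.monotone_fst _ _
        ((strictMono_toLex_sub_ascCount (t := t) (hval e)).monotone (Fin.le_last j))
    have := (e (Fin.last n)).isLt
    have := hle e (Fin.last n)
    simp only [Fin.val_last] at this
    omega
  rw [← card_orderEmbedding_fin]
  exact Nat.card_congr
    { toFun := fun g => OrderEmbedding.ofStrictMono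
        (fun j => ⟨g.1 j + ascCount t j, by
          have := (g.1 j).isLt
          have := ascCount_monotone t (Nat.lt_succ_iff.1 j.isLt)
          omega⟩)
        (strictMono_add_ascCount g.2)
      invFun := fun e => ⟨fun j => ⟨e j - ascCount t j, hlt e j⟩,
        strictMono_toLex_sub_ascCount (hval e)⟩
      left_inv := fun g => by ext j; exact Nat.add_sub_cancel _ _
      right_inv := fun e => by ext j; exact Nat.sub_add_cancel (hle e j) }

end Ascents

open Equiv

theorem permVal_val {m : ℕ} (p : Perm (Fin m)) (i : Fin m) : permVal p i = p i :=
  dif_pos i.isLt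

theorem sort_eq_iff_strictMono_toLex {m k : ℕ} (f : Fin m → Fin k) (p : Perm (Fin m)) :
    Tuple.sort f = p ↔ StrictMono fun i => toLex ((f (p i) : ℕ), permVal p i) := by
  rw [eq_comm, Tuple.eq_sort_iff']
  refine forall₂_congr fun a b => imp_congr_right fun _ => ?_
  change toLex (f (p a), p a) < toLex (f (p b), p b) ↔ _
  simp only [Prod.Lex.toLex_lt_toLex, permVal_val, Fin.lt_def, Fin.val_inj]

theorem card_sort_fiber {n : ℕ} (k : ℕ) (p : Perm (Fin (n + 1))) :
    Nat.card {f : Fin (n + 1) → Fin k // Tuple.sort f = p} =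
      (k + ascCount (permVal p) n).choose (n + 1) := by
  rw [← card_strictMono_toLex]
  exact Nat.card_congr (Equiv.subtypeEquiv (p.symm.arrowCongr (Equiv.refl _))
    fun f => by rw [sort_eq_iff_strictMono_toLex]; rfl)

theorem permVal_mul_revPerm {n : ℕ} (p : Perm (Fin (n + 1))) {j : ℕ} (hj : j ≤ n) :
    permVal (p * Fin.revPerm) j = permVal p (n - j) := by
  rw [permVal, dif_pos (by omega), permVal, dif_pos (by omega), Perm.mul_apply]
  congr 2
  ext
  simp only [Fin.revPerm_apply, Fin.val_rev]
  omega

theorem desNum_mul_revPerm {n : ℕ} (p : Perm (Fin (n + 1))) :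
    desNum (p * Fin.revPerm) = ascCount (permVal p) n := by
  rw [desNum, ascCount, card_filter, card_filter, Nat.add_sub_cancel, ← sum_range_reflect]
  refine sum_congr rfl fun j hj => ?_
  rw [mem_range] at hj
  rw [permVal_mul_revPerm p (by omega), permVal_mul_revPerm p (by omega),
    show n - (n - 1 - j + 1) = j by omega, show n - (n - 1 - j) = j + 1 by omega]

theorem desNum_lt {m : ℕ} (hm : 0 < m) (p : Perm (Fin m)) : desNum p < m :=
  ((card_filter_le _ _).trans (card_range _).le).trans_lt (Nat.sub_lt hm one_pos)

theorem sum_desNum_eq_sum_eulerian {M : Type*} [AddCommMonoid M] {m : ℕ} (hm : 0 < m)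
    (F : ℕ → M) :
    ∑ p : Perm (Fin m), F (desNum p) = ∑ i ∈ range m, eulerian m i • F i := by
  rw [← sum_fiberwise_of_maps_to (t := range m) fun p _ => mem_range.2 (desNum_lt hm p)]
  exact sum_congr rfl fun i _ => sum_eq_card_nsmul fun p hp => congrArg F (mem_filter.1 hp).2

theorem worpitzky_general (k m : ℕ) (hm : 0 < m) :
    k ^ m = ∑ i ∈ Finset.range m, eulerian m i * (k + i).choose m := by
  obtain ⟨n, rfl⟩ := Nat.exists_eq_add_one_of_ne_zero hm.ne'
  calc k ^ (n + 1) = Nat.card (Fin (n + 1) → Fin k) := by simp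
    _ = ∑ p : Perm (Fin (n + 1)), Nat.card {f : Fin (n + 1) → Fin k // Tuple.sort f = p} := by
      rw [← Nat.card_congr (Equiv.sigmaFiberEquiv Tuple.sort), Nat.card_sigma]
    _ = ∑ p : Perm (Fin (n + 1)), (k + desNum (p * Fin.revPerm)).choose (n + 1) := by
      simp only [card_sort_fiber, desNum_mul_revPerm]
    _ = ∑ p : Perm (Fin (n + 1)), (k + desNum p).choose (n + 1) :=
      Equiv.sum_comp (Equiv.mulRight Fin.revPerm) fun p => (k + desNum p).choose (n + 1)
    _ = _ := by
      rw [sum_desNum_eq_sum_eulerian hm fun i => (k + i).choose (n + 1)]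
      simp only [smul_eq_mul]

/-- Worpitzky's identity: `k^m = ∑_{i=0}^{m-1} A(m,i) C(k+i, m)`. -/
theorem worpitzky (k m : ℕ) (hk : 0 < k) (hm : 0 < m) :
    k ^ m = ∑ i ∈ Finset.range m, eulerian m i * (k + i).choose m :=
  worpitzky_general k m hm

end
end

section
/- For positive integers k < n and any positive integer t, the number of integer points (x_1,...,x_n) with 0 ≤ x_i ≤ t and Σ x_i = kt (i.e., lattice points in tΔ_{k,n}) equals (1/(n-1)!) * \sum_{m=0}^{n-1} t^m \sum_{i=0}^{k-1} (-1)^i C(n,i) (k-i)^m P^{n-1-m}_{-i+1, n-1-i}. -/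
/-!
A lattice point of `t Δ_{k,n}` is a composition of `k t` into `n` parts that are at most `t`.
Inclusion–exclusion over the set of parts exceeding `t` counts these as
`∑ i, (-1)^i C(n,i) C(k t - (t+1) i + n - 1, n - 1)`, and only `i < k` contribute.
For `i < n`, `(n-1)! C(k t - (t+1) i + n - 1, n - 1) = ∏_{x = 1-i}^{n-1-i} (x + (k-i) t)`;
the product also vanishes when `k t < (t+1) i`, since then one factor is `x = -(k-i) t`.
Expanding the product in powers of `(k-i) t` (Vieta) produces the `P^{n-1-m}_{1-i, n-1-i}`.
-/

open Finset

noncomputable section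

/-- `esymm j a b = P^j_{a,b}`: the sum over all `j`-element subsets of the integers
`{a, a+1, …, b}` of the product of their elements. -/
def esymm (j : ℕ) (a b : ℤ) : ℤ :=
  ∑ S ∈ (Finset.Icc a b).powersetCard j, ∏ x ∈ S, x

theorem card_filter_forall_not_eq_sum_powerset {α ι : Type*} [DecidableEq ι] (s : Finset ι)
    (U : Finset α) (P : ι → α → Prop) [∀ i, DecidablePred (P i)] :
    (#{a ∈ U | ∀ i ∈ s, ¬ P i a} : ℤ) =
      ∑ T ∈ s.powerset, (-1 : ℤ) ^ #T * #{a ∈ U | ∀ i ∈ T, P i a} := by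
  simp_rw [natCast_card_filter, mul_sum]
  rw [sum_comm]
  refine sum_congr rfl fun a _ ↦ ?_
  have hpowerset : {T ∈ s.powerset | ∀ i ∈ T, P i a} = {i ∈ s | P i a}.powerset := by
    ext T
    simp [subset_iff, forall_and]
  simp_rw [mul_boole]
  rw [← sum_filter, hpowerset, sum_powerset_neg_one_pow_card]
  simp only [filter_eq_empty_iff]

section Compositions

variable {ι : Type*} [Fintype ι] [DecidableEq ι]

theorem card_piAntidiag_univ (m : ℕ) :
    #(piAntidiag (univ : Finset ι) m) = (Fintype.card ι).multichoose m := by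
  rw [← Sym.card_sym_eq_multichoose, ← Fintype.card_coe]
  exact Fintype.card_congr
    ((Equiv.subtypeEquivRight (by simp)).trans (Sym.equivNatSumOfFintype ι m).symm)

theorem card_filter_piAntidiag_univ_le_of_mem (S : Finset ι) (c m : ℕ) :
    #{x ∈ piAntidiag (univ : Finset ι) m | ∀ i ∈ S, c ≤ x i}
      = if c * #S ≤ m then (Fintype.card ι).multichoose (m - c * #S) else 0 := by
  split_ifs with h
  · set e : ι → ℕ := fun i ↦ if i ∈ S then c else 0
    have he : ∑ i, e i = c * #S := by simp [e, sum_ite_mem, mul_comm]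
    rw [← card_piAntidiag_univ]
    refine card_nbij' (· - e) (· + e) (fun x hx ↦ ?_) (fun y hy ↦ ?_) (fun x hx ↦ ?_)
      fun y _ ↦ ?_
    · simp only [coe_filter, Set.mem_ofPred_eq, mem_coe, mem_piAntidiag, mem_univ, implies_true,
        and_true] at hx ⊢
      rw [Pi.sub_def, sum_tsub_distrib _ fun i _ ↦ ?_, hx.1, he]
      by_cases hi : i ∈ S <;> simp [e, hi, hx.2 i]
    · simp only [coe_filter, Set.mem_ofPred_eq, mem_coe, mem_piAntidiag, mem_univ, implies_true,
        and_true] at hy ⊢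
      refine ⟨?_, fun i hi ↦ by simp [e, hi]⟩
      rw [Pi.add_def, sum_add_distrib, hy, he, Nat.sub_add_cancel h]
    · simp only [coe_filter, Set.mem_ofPred_eq, mem_piAntidiag] at hx
      ext i
      by_cases hi : i ∈ S <;> simp [e, hi, hx.2 i]
    · ext i
      simp
  · refine card_eq_zero.2 (filter_eq_empty_iff.2 fun x hx hS ↦ h ?_)
    calc c * #S ≤ ∑ i ∈ S, x i := by simpa [mul_comm] using card_nsmul_le_sum S x c hS
      _ ≤ ∑ i, x i := sum_le_sum_of_subset (subset_univ S)
      _ = m := (mem_piAntidiag.1 hx).1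

theorem card_filter_piAntidiag_univ_le (m t : ℕ) :
    (#{x ∈ piAntidiag (univ : Finset ι) m | ∀ i, x i ≤ t} : ℤ) =
      ∑ j ∈ range (Fintype.card ι + 1), (-1 : ℤ) ^ j * (Fintype.card ι).choose j *
        (if (t + 1) * j ≤ m then (Fintype.card ι).multichoose (m - (t + 1) * j)
          else 0 : ℕ) := by
  have h := card_filter_forall_not_eq_sum_powerset univ (piAntidiag (univ : Finset ι) m)
    (fun i x ↦ t + 1 ≤ x i)
  simp only [mem_univ, true_implies, not_le, Nat.lt_add_one_iff] at h
  set f : ℕ → ℤ := fun j ↦ (-1) ^ j *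
    (if (t + 1) * j ≤ m then (Fintype.card ι).multichoose (m - (t + 1) * j) else 0 : ℕ)
  calc _ = ∑ T ∈ (univ : Finset ι).powerset, f #T := by
        rw [h]
        refine sum_congr rfl fun T _ ↦ ?_
        congr 2
        -- the two filters differ only in their `Decidable` instances
        convert card_filter_piAntidiag_univ_le_of_mem T (t + 1) m
    _ = _ := by
        rw [sum_powerset_apply_card]
        simp only [f, card_univ, nsmul_eq_mul, mul_assoc, mul_left_comm]

end Compositions

theorem ncard_dilate_hypersimplex_lattice (k n t : ℕ) (hk : 0 < k) (hkn : k ≤ n + 1) :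
    (Set.ncard {x : Fin n → ℕ | (∀ i, x i ≤ t) ∧ ∑ i, x i = k * t} : ℚ) =
      ∑ i ∈ range k, (-1 : ℚ) ^ i * n.choose i *
        (if (t + 1) * i ≤ k * t then n.multichoose (k * t - (t + 1) * i) else 0 : ℕ) := by
  have hset : {x : Fin n → ℕ | (∀ i, x i ≤ t) ∧ ∑ i, x i = k * t} =
      ↑{x ∈ piAntidiag (univ : Finset (Fin n)) (k * t) | ∀ i, x i ≤ t} := by
    ext x
    simp [mem_piAntidiag, and_comm]
  have h := congrArg (Int.cast : ℤ → ℚ)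
    (card_filter_piAntidiag_univ_le (ι := Fin n) (k * t) t)
  simp only [Fintype.card_fin, Int.cast_sum, Int.cast_mul, Int.cast_pow, Int.cast_neg,
    Int.cast_one, Int.cast_natCast] at h
  rw [hset, Set.ncard_coe_finset]
  convert h using 1
  · congr!
  · refine sum_subset (range_mono (by omega)) fun i _ hi ↦ ?_
    have : ¬ (t + 1) * i ≤ k * t := by
      simp only [mem_range, not_lt] at hi
      nlinarith
    simp [this]

theorem prod_Icc_add_eq_sum_pow_mul_esymm {R : Type*} [CommRing R] (a b : ℤ) (c : R) :
    ∏ x ∈ Icc a b, ((x : R) + c) =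
      ∑ m ∈ range (#(Icc a b) + 1), c ^ m * esymm (#(Icc a b) - m) a b := by
  rw [prod_add, powerset_card_biUnion,
    sum_biUnion fun _ _ _ _ h ↦ pairwise_disjoint_powersetCard _ h]
  conv_rhs => rw [← sum_range_reflect]
  refine sum_congr rfl fun j hj ↦ ?_
  rw [Nat.add_sub_cancel, Nat.sub_sub_self (Nat.lt_succ_iff.1 (mem_range.1 hj)), esymm,
    Int.cast_sum, mul_sum]
  refine sum_congr rfl fun T hT ↦ ?_
  obtain ⟨hTs, hTcard⟩ := mem_powersetCard.1 hT
  rw [prod_const, card_sdiff_of_subset hTs, hTcard, Int.cast_prod, mul_comm]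

theorem prod_Icc_add_natCast_eq_factorial_mul {R : Type*} [CommRing R] (n i c : ℕ)
    (hi : i < n) :
    ∏ x ∈ Icc (1 - (i : ℤ)) (n - 1 - i), ((x : R) + c) =
      (n - 1).factorial * (if i ≤ c then n.multichoose (c - i) else 0 : ℕ) := by
  rw [Int.Icc_eq_finset_map, prod_map, show (n - 1 - i + 1 - (1 - i) : ℤ).toNat = n - 1 by omega]
  simp only [Function.Embedding.trans_apply, Nat.castEmbedding_apply, addLeftEmbedding_apply]
  split_ifs with hc
  · have hasc :
        (n - 1).factorial * n.multichoose (c - i) = (c - i + 1).ascFactorial (n - 1) := by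
      rw [Nat.ascFactorial_eq_factorial_mul_choose, Nat.multichoose_eq,
        show n + (c - i) - 1 = c - i + (n - 1) by omega, Nat.choose_symm_add]
    rw [← Nat.cast_mul, hasc, Nat.ascFactorial_eq_prod_range, Nat.cast_prod]
    refine prod_congr rfl fun j _ ↦ ?_
    push_cast [hc]
    ring
  · rw [Nat.cast_zero, mul_zero]
    refine prod_eq_zero (i := i - (c + 1)) (mem_range.2 (by omega)) ?_
    push_cast [Nat.cast_sub (show c + 1 ≤ i by omega)]
    ring

theorem sum_range_pow_mul_esymm_eq_factorial_mul {R : Type*} [CommRing R] (n i c : ℕ)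
    (hi : i < n) :
    ∑ m ∈ range n, (c : R) ^ m * esymm (n - 1 - m) (1 - i) (n - 1 - i) =
      (n - 1).factorial * (if i ≤ c then n.multichoose (c - i) else 0 : ℕ) := by
  have h := prod_Icc_add_eq_sum_pow_mul_esymm (1 - (i : ℤ)) (n - 1 - i) (c : R)
  rwa [Int.card_Icc, show (n - 1 - i + 1 - (1 - i) : ℤ).toNat = n - 1 by omega,
    Nat.sub_add_cancel (by omega), prod_Icc_add_natCast_eq_factorial_mul n i c hi, eq_comm] at h

theorem hypersimplex_count_expanded_general (k n t : ℕ) (hk : 0 < k) (hkn : k < n) :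
    (Set.ncard {x : Fin n → ℕ | (∀ i, x i ≤ t) ∧ ∑ i, x i = k * t} : ℚ)
      = (1 / (Nat.factorial (n - 1) : ℚ)) *
          ∑ m ∈ Finset.range n, (t : ℚ) ^ m *
            ∑ i ∈ Finset.range k,
              (-1 : ℚ) ^ i * n.choose i * ((k - i : ℕ) : ℚ) ^ m *
                ((esymm (n - 1 - m) (1 - (i : ℤ)) ((n : ℤ) - 1 - i) : ℤ) : ℚ) := by
  have hterm : ∀ i ∈ range k, ∑ m ∈ range n, (t : ℚ) ^ m *
      ((-1 : ℚ) ^ i * n.choose i * ((k - i : ℕ) : ℚ) ^ m *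
        ((esymm (n - 1 - m) (1 - (i : ℤ)) ((n : ℤ) - 1 - i) : ℤ) : ℚ)) =
      (n - 1).factorial * ((-1 : ℚ) ^ i * n.choose i *
        (if (t + 1) * i ≤ k * t then n.multichoose (k * t - (t + 1) * i) else 0 : ℕ)) := by
    intro i hi
    have hik := mem_range.1 hi
    have hshift : (if (t + 1) * i ≤ k * t then n.multichoose (k * t - (t + 1) * i) else 0) =
        if i ≤ (k - i) * t then n.multichoose ((k - i) * t - i) else 0 := by
      have hle : i * t ≤ k * t := Nat.mul_le_mul_right t hik.le
      simp only [add_one_mul, mul_comm t i, Nat.sub_mul]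
      split_ifs <;> first | rfl | omega | (congr 1; omega)
    rw [hshift, mul_left_comm,
      ← sum_range_pow_mul_esymm_eq_factorial_mul n i ((k - i) * t) (by omega), mul_sum]
    refine sum_congr rfl fun m _ ↦ ?_
    push_cast
    ring
  rw [ncard_dilate_hypersimplex_lattice k n t hk (by omega),
    sum_congr rfl fun m _ ↦ mul_sum _ _ _, sum_comm, sum_congr rfl hterm, ← mul_sum, one_div,
    inv_mul_cancel_left₀ (by positivity)]

/-- The number of lattice points in the `t`-th dilate of the hypersimplex `Δ_{k,n}`
equals `(1/(n-1)!) ∑_{m=0}^{n-1} t^m ∑_{i=0}^{k-1} (-1)^i C(n,i) (k-i)^m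
P^{n-1-m}_{-i+1, n-1-i}`. -/
theorem hypersimplex_count_expanded (k n t : ℕ) (hk : 0 < k) (hkn : k < n) (ht : 0 < t) :
    (Set.ncard {x : Fin n → ℕ | (∀ i, x i ≤ t) ∧ ∑ i, x i = k * t} : ℚ)
      = (1 / (Nat.factorial (n - 1) : ℚ)) *
          ∑ m ∈ Finset.range n, (t : ℚ) ^ m *
            ∑ i ∈ Finset.range k,
              (-1 : ℚ) ^ i * n.choose i * ((k - i : ℕ) : ℚ) ^ m *
                ((esymm (n - 1 - m) (1 - (i : ℤ)) ((n : ℤ) - 1 - i) : ℤ) : ℚ) :=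
  hypersimplex_count_expanded_general k n t hk hkn

end
end

section
/- Fix positive integers n, m+1 ≤ n and k. The product k^m * [n, m+1] (where [n, m+1] is the unsigned Stirling number of the first kind) equals the number of cycle-ordered, weighted permutations of {1,...,n} of type (n, m+1, k). -/
open Finset

noncomputable section

/-- `x` is the minimum of its cycle under `σ`. -/
def IsCycleMin {n : ℕ} (σ : Equiv.Perm (Fin n)) (x : Fin n) : Prop :=
  ∀ y, σ.SameCycle x y → x ≤ y

open scoped Classical in
/-- The number of cycles of `σ` (including fixed points). -/
def numCycles {n : ℕ} (σ : Equiv.Perm (Fin n)) : ℕ :=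
  (Finset.univ.filter fun x => IsCycleMin σ x).card

open scoped Classical in
/-- The unsigned Stirling number of the first kind `[n, m]`. -/
def stirlingFirst (n m : ℕ) : ℕ :=
  (Finset.univ.filter fun σ : Equiv.Perm (Fin n) => numCycles σ = m).card

/-!
Split a cycle-ordered weighted permutation `(σ, p, w)` into `σ`, counted by `[n, m+1]`, and the
pair `(p, g)`, where `g` lists the weights of the `m + 1` cycles. It remains to see that the pairs
with `p (last) = 0` and `∑ g + des p = k` are in bijection with the maps `Fin m → Fin k`
(Worpitzky's identity via barred permutations). Along the positions of `p` put the levels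
`L j = g 0 + ⋯ + g j + #(descents of p before j)`: they increase weakly, strictly across a
descent, and end at `k` on the value `0`. Hence `f v := L (p⁻¹ (v + 1)) < k`, and
`j ↦ (L j, p j)` is lexicographically increasing, so `p` is the permutation sorting
`(k, f 0, …, f (m - 1))` with ties broken by position, and `g` is read off from the gaps between
consecutive levels.
-/

open Equiv

namespace Tuple

variable {α : Type*} [LinearOrder α] {n : ℕ}

theorem eq_sort_iff_strictMono_toLex {f : Fin n → α} {σ : Perm (Fin n)} :
    σ = Tuple.sort f ↔ StrictMono fun i => toLex (f (σ i), σ i) :=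
  Tuple.eq_sort_iff'

theorem sort_last_eq_of_forall_lt {f : Fin (n + 1) → α} {a : Fin (n + 1)}
    (h : ∀ i, i ≠ a → f i < f a) : Tuple.sort f (Fin.last n) = a := by
  by_contra hne
  have := Tuple.monotone_sort f (Fin.le_last ((Tuple.sort f).symm a))
  simp only [Function.comp_apply, Equiv.apply_symm_apply] at this
  exact (h _ hne).not_ge this

end Tuple

section Levels

variable {m : ℕ} (p : Perm (Fin (m + 1)))

def descentAt (j : Fin m) : ℕ := if p j.succ < p j.castSucc then 1 else 0

theorem desNum_eq_sum_descentAt : desNum p = ∑ j, descentAt p j := by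
  rw [desNum, Nat.add_sub_cancel, card_filter, ← Fin.sum_univ_eq_sum_range]
  refine sum_congr rfl fun j _ => ?_
  simp [descentAt, permVal, Fin.succ, Fin.castSucc, Fin.castAdd, Fin.castLE]

def level (g : Fin (m + 1) → ℕ) (j : Fin (m + 1)) : ℕ :=
  g 0 + Fin.partialSum (fun i => g i.succ + descentAt p i) j

@[simp]
theorem level_zero (g : Fin (m + 1) → ℕ) : level p g 0 = g 0 := by
  simp [level]

theorem level_succ (g : Fin (m + 1) → ℕ) (j : Fin m) :
    level p g j.succ = level p g j.castSucc + g j.succ + descentAt p j := by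
  simp only [level, Fin.partialSum_succ]
  ring

theorem level_last (g : Fin (m + 1) → ℕ) :
    level p g (Fin.last m) = ∑ i, g i + desNum p := by
  simp [level, Fin.partialSum, List.take_of_length_le, Fin.sum_univ_succ, sum_add_distrib,
    desNum_eq_sum_descentAt, List.sum_ofFn, add_assoc]

theorem toLex_lt_toLex_succ_iff (L : Fin (m + 1) → ℕ) (j : Fin m) :
    toLex (L j.castSucc, p j.castSucc) < toLex (L j.succ, p j.succ) ↔
      L j.castSucc + descentAt p j ≤ L j.succ := by
  have hne : p j.succ ≠ p j.castSucc := p.injective.ne Fin.castSucc_lt_succ.ne'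
  rw [Prod.Lex.toLex_lt_toLex, descentAt]
  split_ifs <;> grind

theorem strictMono_toLex_level (g : Fin (m + 1) → ℕ) :
    StrictMono fun j => toLex (level p g j, p j) :=
  Fin.strictMono_iff_lt_succ.2 fun j => by
    rw [toLex_lt_toLex_succ_iff, level_succ]
    omega

theorem level_injective : Function.Injective (level p) := by
  intro g g' h
  funext i
  refine Fin.cases (by simpa using congrFun h 0) (fun j => ?_) i
  have hs := level_succ p g j
  have hs' := level_succ p g' j
  rw [h] at hs
  omega

theorem exists_level_eq {L : Fin (m + 1) → ℕ} (hL : StrictMono fun j => toLex (L j, p j)) :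
    ∃ g, level p g = L := by
  refine ⟨Fin.cons (L 0) fun j => L j.succ - L j.castSucc - descentAt p j, funext fun i => ?_⟩
  induction i using Fin.induction with
  | zero => simp
  | succ j ih =>
    have := (toLex_lt_toLex_succ_iff p L j).1 (hL Fin.castSucc_lt_succ)
    rw [level_succ, ih, Fin.cons_succ]
    omega

theorem level_lt_level_last (hp : p (Fin.last m) = 0) (g : Fin (m + 1) → ℕ) {j : Fin (m + 1)}
    (hj : j ≠ Fin.last m) : level p g j < level p g (Fin.last m) := by
  have := strictMono_toLex_level p g (Fin.lt_last_iff_ne_last.2 hj)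
  rw [Prod.Lex.toLex_lt_toLex, hp] at this
  simpa using this

end Levels

@[ext]
structure WeightedOrdering (m k : ℕ) where
  perm : Perm (Fin (m + 1))
  weight : Fin (m + 1) → ℕ
  perm_last : perm (Fin.last m) = 0
  sum_weight_add_desNum : ∑ i, weight i + desNum perm = k

namespace WeightedOrdering

variable {m k : ℕ}

theorem level_last_eq (a : WeightedOrdering m k) : level a.perm a.weight (Fin.last m) = k := by
  rw [level_last, a.sum_weight_add_desNum]

def levelOfValue (a : WeightedOrdering m k) (v : Fin m) : Fin k :=
  ⟨level a.perm a.weight (a.perm.symm v.succ),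
    (level_lt_level_last _ a.perm_last _ fun h =>
      Fin.succ_ne_zero v ((a.perm.symm_apply_eq.1 h).trans a.perm_last)).trans_eq a.level_last_eq⟩

theorem cons_levelOfValue (a : WeightedOrdering m k) :
    (Fin.cons k fun v => (a.levelOfValue v : ℕ) : Fin (m + 1) → ℕ) =
      level a.perm a.weight ∘ a.perm.symm := by
  funext i
  cases i using Fin.cases with
  | zero => simp [a.perm.symm_apply_eq.2 a.perm_last.symm, a.level_last_eq]
  | succ v => rfl

theorem perm_eq_sort (a : WeightedOrdering m k) :
    a.perm = Tuple.sort (Fin.cons k fun v => (a.levelOfValue v : ℕ) : Fin (m + 1) → ℕ) := by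
  rw [cons_levelOfValue, Tuple.eq_sort_iff_strictMono_toLex]
  simpa using strictMono_toLex_level a.perm a.weight

theorem levelOfValue_injective :
    Function.Injective (levelOfValue : WeightedOrdering m k → Fin m → Fin k) := by
  intro a b h
  have hperm : a.perm = b.perm := by rw [a.perm_eq_sort, b.perm_eq_sort, h]
  have hlevel := a.cons_levelOfValue
  rw [h, b.cons_levelOfValue, hperm] at hlevel
  exact WeightedOrdering.ext hperm
    (level_injective _ (b.perm.symm.surjective.injective_comp_right hlevel).symm)

theorem levelOfValue_surjective :
    Function.Surjective (levelOfValue : WeightedOrdering m k → Fin m → Fin k) := by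
  intro f
  set F : Fin (m + 1) → ℕ := Fin.cons k fun v => (f v : ℕ)
  set p := Tuple.sort F
  obtain ⟨g, hg⟩ := exists_level_eq p (Tuple.eq_sort_iff_strictMono_toLex.1 rfl)
  have hp : p (Fin.last m) = 0 := Tuple.sort_last_eq_of_forall_lt fun i hi => by
    obtain ⟨v, rfl⟩ := Fin.exists_succ_eq.2 hi
    simp [F]
  have hsum : ∑ i, g i + desNum p = k := by
    rw [← level_last, hg]
    simp [hp, F]
  refine ⟨⟨p, g, hp, hsum⟩, funext fun v => Fin.ext ?_⟩
  simp [levelOfValue, hg, F]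

theorem card (m k : ℕ) : Nat.card (WeightedOrdering m k) = k ^ m := by
  rw [Nat.card_eq_of_bijective _ ⟨levelOfValue_injective, levelOfValue_surjective⟩]
  simp

end WeightedOrdering

theorem Fintype.sum_comp_equiv_subtype {α ι M : Type*} [Fintype α] [Fintype ι] [AddCommMonoid M]
    {P : α → Prop} (e : ι ≃ {x // P x}) {w : α → M} (hw : ∀ x, ¬ P x → w x = 0) :
    ∑ i, w (e i) = ∑ x, w x :=
  Fintype.sum_of_injective _ (Subtype.val_injective.comp e.injective) _ _
    (fun x hx => hw x fun hPx => hx ⟨e.symm ⟨x, hPx⟩, by simp⟩) fun _ => rfl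

section CycleOrdered

variable {n m k : ℕ}

theorem natCard_isCycleMin (σ : Perm (Fin n)) :
    Nat.card {x // IsCycleMin σ x} = numCycles σ := by
  classical
  rw [numCycles, Nat.card_eq_fintype_card, Fintype.card_subtype]

-- Any enumeration of the cycles will do: it only transports the weights.
def cycleMinEquiv {σ : Perm (Fin n)} (hσ : numCycles σ = m + 1) :
    Fin (m + 1) ≃ {x // IsCycleMin σ x} :=
  (Finite.equivFinOfCardEq ((natCard_isCycleMin σ).trans hσ)).symm

-- The weight of a cycle is stored at its minimum.
def cycleOrderedWeighted (n m k : ℕ) :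
    Set (Perm (Fin n) × Perm (Fin (m + 1)) × (Fin n → ℕ)) :=
  {spw | numCycles spw.1 = m + 1 ∧ spw.2.1 (Fin.last m) = 0 ∧
    (∀ y, ¬ IsCycleMin spw.1 y → spw.2.2 y = 0) ∧ ∑ x, spw.2.2 x + desNum spw.2.1 = k}

def restrictWeight (a : cycleOrderedWeighted n m k) :
    {σ : Perm (Fin n) // numCycles σ = m + 1} × WeightedOrdering m k :=
  (⟨a.1.1, a.2.1⟩, ⟨a.1.2.1, fun i => a.1.2.2 (cycleMinEquiv a.2.1 i), a.2.2.1, by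
    rw [Fintype.sum_comp_equiv_subtype _ a.2.2.2.1, a.2.2.2.2]⟩)

theorem restrictWeight_bijective :
    Function.Bijective (restrictWeight : cycleOrderedWeighted n m k → _) := by
  constructor
  · rintro ⟨⟨σ, p, w⟩, hσ, hp, hw, hsum⟩ ⟨⟨σ', p', w'⟩, hσ', hp', hw', hsum'⟩ h
    simp only [restrictWeight, Prod.mk.injEq, Subtype.mk.injEq, WeightedOrdering.mk.injEq] at h
    obtain ⟨rfl, rfl, hww⟩ := h
    refine Subtype.ext (Prod.ext rfl (Prod.ext rfl (funext fun x => ?_)))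
    by_cases hx : IsCycleMin σ x
    · simpa using congrFun hww ((cycleMinEquiv hσ).symm ⟨x, hx⟩)
    · rw [hw x hx, hw' x hx]
  · rintro ⟨⟨σ, hσ⟩, ⟨p, g, hp, hsum⟩⟩
    have hinj : Function.Injective fun i => (cycleMinEquiv hσ i : Fin n) :=
      Subtype.val_injective.comp (cycleMinEquiv hσ).injective
    set w := Function.extend (fun i => (cycleMinEquiv hσ i : Fin n)) g 0
    have hwg : ∀ i, w (cycleMinEquiv hσ i) = g i := hinj.extend_apply g 0
    have hw : ∀ y, ¬ IsCycleMin σ y → w y = 0 := fun y hy =>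
      Function.extend_apply' _ _ _ fun ⟨i, hi⟩ => hy (hi ▸ (cycleMinEquiv hσ i).2)
    refine ⟨⟨(σ, p, w), hσ, hp, hw, ?_⟩, ?_⟩
    · rw [← Fintype.sum_comp_equiv_subtype (cycleMinEquiv hσ) hw]
      simpa [hwg] using hsum
    · simp [restrictWeight, hwg]

theorem ncard_cycleOrderedWeighted (n m k : ℕ) :
    (cycleOrderedWeighted n m k).ncard = k ^ m * stirlingFirst n (m + 1) := by
  rw [← Nat.card_coe_set_eq, Nat.card_eq_of_bijective _ restrictWeight_bijective,
    Nat.card_prod, WeightedOrdering.card, mul_comm, stirlingFirst, ← Fintype.card_subtype,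
    Nat.card_eq_fintype_card]

end CycleOrdered

theorem pow_mul_stirling_eq_ncard_general (n m k : ℕ) :
    k ^ m * stirlingFirst n (m + 1)
      = Set.ncard {spw : Equiv.Perm (Fin n) × Equiv.Perm (Fin (m + 1)) × (Fin n → ℕ) |
          numCycles spw.1 = m + 1 ∧
          spw.2.1 ⟨m, Nat.lt_succ_self m⟩ = ⟨0, Nat.succ_pos m⟩ ∧
          (∀ y, ¬ IsCycleMin spw.1 y → spw.2.2 y = 0) ∧
          (∑ x, spw.2.2 x) + desNum spw.2.1 = k} :=
  (ncard_cycleOrderedWeighted n m k).symm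

/-- `k^m ⬝ [n, m+1]` counts the cycle-ordered, weighted permutations of `[n]` of type
`(n, m+1, k)`.  Here a cycle-ordered, weighted permutation is a triple `(σ, p, w)`,
where `σ` is a permutation of `Fin n` with `m+1` cycles, `p` is a permutation of
`Fin (m+1)` sending the last element to the first (ordering the cycles of `σ`, with
the cycle of the smallest element last), and `w` is a weight function on the cycles
of `σ`, encoded as a function on `Fin n` vanishing off the minimal elements of the
cycles.  The type is `(n, m+1, k)` when the total weight plus `des(p)` equals `k`. -/
theorem pow_mul_stirling_eq_ncard (n m k : ℕ) (hn : 0 < n) (hm : m + 1 ≤ n)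
    (hk : 0 < k) :
    k ^ m * stirlingFirst n (m + 1)
      = Set.ncard {spw : Equiv.Perm (Fin n) × Equiv.Perm (Fin (m + 1)) × (Fin n → ℕ) |
          numCycles spw.1 = m + 1 ∧
          spw.2.1 ⟨m, Nat.lt_succ_self m⟩ = ⟨0, Nat.succ_pos m⟩ ∧
          (∀ y, ¬ IsCycleMin spw.1 y → spw.2.2 y = 0) ∧
          (∑ x, spw.2.2 x) + desNum spw.2.1 = k} :=
  pow_mul_stirling_eq_ncard_general n m k

end
end
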